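/- arXiv:2603.03035 — 2 statements merged into one kernel-verified Lean document; each statement's English description precedes it below -/
import Mathlib

section
/- Let (Ω, F, P) be a probability space, X : Ω → 𝒳 a random element in a measurable space, A : Ω → {0,1} a binary random variable, and Y : Ω → ℝ an integrable random variable. Let e : 𝒳 → ℝ be measurable with e(X) a version of the conditional expectation E[A | σ(X)] and 0 < e(X) < 1 almost surely, and let m₀, m₁ : 𝒳 → ℝ be measurable with A·m₁(X) + (1−A)·m₀(X) a version of E[Y | σ(X,A)]. Define the doubly robust pseudo-outcome Ŷ^{DR} = (A/e(X) − (1−A)/(1−e(X)))·(Y − (A·m₁(X) + (1−A)·m₀(X))) + m₁(X) − m₀(X), and assume Ŷ^{DR} is integrable. Then E[Ŷ^{DR} | σ(X)] = m₁(X) − m₀(X) almost surely; in particular, E[Ŷ^{DR}] = E[m₁(X) − m₀(X)]. -/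
open MeasureTheory Filter
open scoped ENNReal Topology

/-- **Conditional unbiasedness of the doubly robust (AIPW) pseudo-outcome at the true
nuisances.** If `e(X)` is a version of `E[A | σ(X)]` with `0 < e(X) < 1` a.s., and
`A·m₁(X) + (1−A)·m₀(X)` is a version of `E[Y | σ(X,A)]`, then the DR pseudo-outcome
`Ŷ^DR = (A/e(X) − (1−A)/(1−e(X)))·(Y − (A·m₁(X)+(1−A)·m₀(X))) + m₁(X) − m₀(X)`
satisfies `E[Ŷ^DR | σ(X)] = m₁(X) − m₀(X)` a.s.; in particular
`E[Ŷ^DR] = E[m₁(X) − m₀(X)]`. -/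
theorem dr_pseudo_outcome_conditionally_unbiased
    {Ω 𝒳 : Type*} [MeasurableSpace Ω] [MeasurableSpace 𝒳]
    (P : Measure Ω) [IsProbabilityMeasure P]
    (X : Ω → 𝒳) (hX : Measurable X)
    (A : Ω → ℝ) (hA : Measurable A) (hA01 : ∀ ω, A ω = 0 ∨ A ω = 1)
    (Y : Ω → ℝ) (hY : Measurable Y) (hYint : Integrable Y P)
    (e : 𝒳 → ℝ) (he : Measurable e)
    (heX : (fun ω => e (X ω)) =ᵐ[P] P[A | MeasurableSpace.comap X inferInstance])
    (he01 : ∀ᵐ ω ∂P, 0 < e (X ω) ∧ e (X ω) < 1)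
    (m₀ m₁ : 𝒳 → ℝ) (hm₀ : Measurable m₀) (hm₁ : Measurable m₁)
    (hm : (fun ω => A ω * m₁ (X ω) + (1 - A ω) * m₀ (X ω)) =ᵐ[P]
      P[Y | MeasurableSpace.comap X inferInstance ⊔
            MeasurableSpace.comap A inferInstance])
    (YDR : Ω → ℝ)
    (hYDRdef : YDR = fun ω =>
      (A ω / e (X ω) - (1 - A ω) / (1 - e (X ω))) *
        (Y ω - (A ω * m₁ (X ω) + (1 - A ω) * m₀ (X ω))) + m₁ (X ω) - m₀ (X ω))
    (hYDRint : Integrable YDR P) :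
    P[YDR | MeasurableSpace.comap X inferInstance] =ᵐ[P]
      (fun ω => m₁ (X ω) - m₀ (X ω)) ∧
    ∫ ω, YDR ω ∂P = ∫ ω, (m₁ (X ω) - m₀ (X ω)) ∂P := by
  set c : Ω → ℝ := fun ω => m₁ (X ω) - m₀ (X ω) with hc_def
  set μf : Ω → ℝ := fun ω => A ω * m₁ (X ω) + (1 - A ω) * m₀ (X ω) with hμf_def
  set W : Ω → ℝ := fun ω => A ω / e (X ω) - (1 - A ω) / (1 - e (X ω)) with hW_def
  have hmX_le : (MeasurableSpace.comap X inferInstance) ≤ ‹MeasurableSpace Ω› := hX.comap_le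
  have hmA_le : (MeasurableSpace.comap A inferInstance) ≤ ‹MeasurableSpace Ω› := hA.comap_le
  have hm'_le : (MeasurableSpace.comap X inferInstance) ⊔ (MeasurableSpace.comap A inferInstance) ≤ ‹MeasurableSpace Ω› := sup_le hmX_le hmA_le
  have hXmX : Measurable[(MeasurableSpace.comap X inferInstance)] X := measurable_iff_comap_le.mpr le_rfl
  have hAmA : Measurable[(MeasurableSpace.comap A inferInstance)] A := measurable_iff_comap_le.mpr le_rfl
  have hXm' : Measurable[(MeasurableSpace.comap X inferInstance) ⊔ (MeasurableSpace.comap A inferInstance)] X := hXmX.mono le_sup_left le_rfl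
  have hAm' : Measurable[(MeasurableSpace.comap X inferInstance) ⊔ (MeasurableSpace.comap A inferInstance)] A := hAmA.mono le_sup_right le_rfl
  have hA01' : ∀ ω, 0 ≤ A ω ∧ A ω ≤ 1 := fun ω => by
    rcases hA01 ω with h | h <;> simp [h]
  -- basic measurability
  have hcmeas : Measurable c := (hm₁.comp hX).sub (hm₀.comp hX)
  have hμmeas : Measurable μf := (hA.mul (hm₁.comp hX)).add
    ((measurable_const.sub hA).mul (hm₀.comp hX))
  have hYDRmeas : Measurable YDR := by
    rw [hYDRdef]
    exact (((hA.div (he.comp hX)).sub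
      ((measurable_const.sub hA).div (measurable_const.sub (he.comp hX)))).mul
      (hY.sub ((hA.mul (hm₁.comp hX)).add
        ((measurable_const.sub hA).mul (hm₀.comp hX))))).add (hm₁.comp hX)
      |>.sub (hm₀.comp hX)
  -- μf is integrable (it is a.e. a conditional expectation)
  have hμint : Integrable μf P := integrable_condExp.congr hm.symm
  have hAint : Integrable A P := by
    refine Integrable.mono' (integrable_const (1 : ℝ)) hA.aestronglyMeasurable ?_
    exact Eventually.of_forall fun ω => by
      rcases hA01 ω with h | h <;> simp [h]
  -- integrability of auxiliary products
  have heAYDR : Integrable (fun ω => e (X ω) * A ω * YDR ω) P := by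
    refine Integrable.mono' hYDRint.abs
      (((he.comp hX).mul hA).mul hYDRmeas).aestronglyMeasurable ?_
    filter_upwards [he01] with ω ⟨h0, h1⟩
    have h2 := (hA01' ω).1; have h3 := (hA01' ω).2
    rw [Real.norm_eq_abs, abs_mul, abs_mul]
    have he1 : |e (X ω)| ≤ 1 := by rw [abs_of_pos h0]; linarith
    have hA1 : |A ω| ≤ 1 := by rw [abs_of_nonneg h2]; linarith
    have hprod : |e (X ω)| * |A ω| ≤ 1 := mul_le_one₀ he1 (abs_nonneg _) hA1
    calc |e (X ω)| * |A ω| * |YDR ω| ≤ 1 * |YDR ω| :=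
          mul_le_mul_of_nonneg_right hprod (abs_nonneg _)
      _ = |YDR ω| := one_mul _
  have hAY : Integrable (fun ω => A ω * Y ω) P := by
    refine Integrable.mono' hYint.abs (hA.mul hY).aestronglyMeasurable ?_
    refine Eventually.of_forall fun ω => ?_
    rw [Real.norm_eq_abs, abs_mul]
    have hA1 : |A ω| ≤ 1 := by rw [abs_of_nonneg (hA01' ω).1]; exact (hA01' ω).2
    nlinarith [abs_nonneg (Y ω)]
  have hAμ : Integrable (fun ω => A ω * μf ω) P := by
    refine Integrable.mono' hμint.abs (hA.mul hμmeas).aestronglyMeasurable ?_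
    refine Eventually.of_forall fun ω => ?_
    rw [Real.norm_eq_abs, abs_mul]
    have hA1 : |A ω| ≤ 1 := by rw [abs_of_nonneg (hA01' ω).1]; exact (hA01' ω).2
    nlinarith [abs_nonneg (μf ω)]
  have heAYDR' : Integrable (fun ω => (1 - e (X ω)) * (1 - A ω) * YDR ω) P := by
    refine Integrable.mono' hYDRint.abs
      (((measurable_const.sub (he.comp hX)).mul (measurable_const.sub hA)).mul
        hYDRmeas).aestronglyMeasurable ?_
    filter_upwards [he01] with ω ⟨h0, h1⟩
    have h2 := (hA01' ω).1; have h3 := (hA01' ω).2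
    rw [Real.norm_eq_abs, abs_mul, abs_mul]
    have he1 : |1 - e (X ω)| ≤ 1 := by rw [abs_of_pos (by linarith)]; linarith
    have hA1 : |1 - A ω| ≤ 1 := by rw [abs_of_nonneg (by linarith)]; linarith
    have hprod : |1 - e (X ω)| * |1 - A ω| ≤ 1 := mul_le_one₀ he1 (abs_nonneg _) hA1
    calc |1 - e (X ω)| * |1 - A ω| * |YDR ω| ≤ 1 * |YDR ω| :=
          mul_le_mul_of_nonneg_right hprod (abs_nonneg _)
      _ = |YDR ω| := one_mul _
  have hAY' : Integrable (fun ω => (1 - A ω) * Y ω) P := by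
    refine Integrable.mono' hYint.abs
      ((measurable_const.sub hA).mul hY).aestronglyMeasurable ?_
    refine Eventually.of_forall fun ω => ?_
    rw [Real.norm_eq_abs, abs_mul]
    have := (hA01' ω).1; have := (hA01' ω).2
    have hA1 : |1 - A ω| ≤ 1 := by rw [abs_of_nonneg (by linarith)]; linarith
    nlinarith [abs_nonneg (Y ω)]
  have hAμ' : Integrable (fun ω => (1 - A ω) * μf ω) P := by
    refine Integrable.mono' hμint.abs
      ((measurable_const.sub hA).mul hμmeas).aestronglyMeasurable ?_
    refine Eventually.of_forall fun ω => ?_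
    rw [Real.norm_eq_abs, abs_mul]
    have := (hA01' ω).1; have := (hA01' ω).2
    have hA1 : |1 - A ω| ≤ 1 := by rw [abs_of_nonneg (by linarith)]; linarith
    nlinarith [abs_nonneg (μf ω)]
  -- `e(X)·A·c` is integrable
  have h1 : Integrable ((fun ω => e (X ω) * c ω) * A) P := by
    refine ((heAYDR.sub hAY).add hAμ).congr ?_
    filter_upwards [he01] with ω ⟨h0, h1⟩
    have hne0 : e (X ω) ≠ 0 := ne_of_gt h0
    have hne1 : (1 : ℝ) - e (X ω) ≠ 0 := ne_of_gt (by linarith)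
    show e (X ω) * A ω * YDR ω - A ω * Y ω + A ω * μf ω = e (X ω) * c ω * A ω
    rcases hA01 ω with h | h <;>
      · simp only [hYDRdef, hc_def, hμf_def, h]
        field_simp
        try ring
  -- `(1-e(X))·(1-A)·c` is integrable
  have h1' : Integrable ((fun ω => (1 - e (X ω)) * c ω) * (fun ω => 1 - A ω)) P := by
    refine ((heAYDR'.add hAY').sub hAμ').congr ?_
    filter_upwards [he01] with ω ⟨h0, h1⟩
    have hne0 : e (X ω) ≠ 0 := ne_of_gt h0
    have hne1 : (1 : ℝ) - e (X ω) ≠ 0 := ne_of_gt (by linarith)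
    show (1 - e (X ω)) * (1 - A ω) * YDR ω + (1 - A ω) * Y ω - (1 - A ω) * μf ω
        = (1 - e (X ω)) * c ω * (1 - A ω)
    rcases hA01 ω with h | h <;>
      · simp only [hYDRdef, hc_def, hμf_def, h]
        field_simp
        try ring
  -- pull-out: e(X)²·c is integrable
  have hecsm : StronglyMeasurable[(MeasurableSpace.comap X inferInstance)] (fun ω => e (X ω) * c ω) :=
    ((he.comp hXmX).mul ((hm₁.comp hXmX).sub (hm₀.comp hXmX))).stronglyMeasurable
  have h2 : Integrable (fun ω => e (X ω) ^ 2 * c ω) P := by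
    have hpull := condExp_mul_of_stronglyMeasurable_left (μ := P) hecsm h1 hAint
    refine integrable_condExp.congr (hpull.trans ?_)
    filter_upwards [heX] with ω hω
    simp only [Pi.mul_apply]
    rw [← hω]; ring
  -- pull-out: (1-e(X))²·c is integrable
  have hecsm' : StronglyMeasurable[(MeasurableSpace.comap X inferInstance)] (fun ω => (1 - e (X ω)) * c ω) :=
    ((measurable_const.sub (he.comp hXmX)).mul
      ((hm₁.comp hXmX).sub (hm₀.comp hXmX))).stronglyMeasurable
  have hA'int : Integrable (fun ω => 1 - A ω) P := (integrable_const 1).sub hAint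
  have hA'cond : P[(fun ω => 1 - A ω) | (MeasurableSpace.comap X inferInstance)] =ᵐ[P] fun ω => 1 - e (X ω) := by
    have hsub : P[(fun _ => (1 : ℝ)) - A | (MeasurableSpace.comap X inferInstance)]
        =ᵐ[P] P[(fun _ => (1 : ℝ)) | (MeasurableSpace.comap X inferInstance)] - P[A | (MeasurableSpace.comap X inferInstance)] :=
      condExp_sub (integrable_const 1) hAint _
    have hone : P[(fun _ : Ω => (1 : ℝ)) | (MeasurableSpace.comap X inferInstance)] = fun _ => 1 := condExp_const hmX_le 1
    refine hsub.trans ?_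
    filter_upwards [heX] with ω hω
    simp [Pi.sub_apply, hone, ← hω]
  have h2' : Integrable (fun ω => (1 - e (X ω)) ^ 2 * c ω) P := by
    have hpull := condExp_mul_of_stronglyMeasurable_left (μ := P) hecsm' h1' hA'int
    refine integrable_condExp.congr (hpull.trans ?_)
    filter_upwards [hA'cond] with ω hω
    simp only [Pi.mul_apply]
    rw [hω]; ring
  -- hence c is integrable
  have hcint : Integrable c P := by
    refine Integrable.mono' ((h2.abs.add h2'.abs).const_mul 2)
      hcmeas.aestronglyMeasurable ?_
    filter_upwards [he01] with ω ⟨h0, h1⟩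
    simp only [Pi.add_apply]
    rw [Real.norm_eq_abs, abs_mul, abs_mul, abs_of_nonneg (sq_nonneg (e (X ω))),
      abs_of_nonneg (sq_nonneg (1 - e (X ω)))]
    nlinarith [abs_nonneg (c ω), sq_nonneg (2 * e (X ω) - 1)]
  -- main computation
  have hWYint : Integrable (fun ω => W ω * (Y ω - μf ω)) P := by
    have hfun : (fun ω => W ω * (Y ω - μf ω)) = fun ω => YDR ω - c ω := by
      funext ω; simp only [hYDRdef, hW_def, hc_def, hμf_def]; ring
    rw [hfun]; exact hYDRint.sub hcint
  have hYμint : Integrable (fun ω => Y ω - μf ω) P := hYint.sub hμint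
  have hWsm : StronglyMeasurable[(MeasurableSpace.comap X inferInstance) ⊔ (MeasurableSpace.comap A inferInstance)] W :=
    ((hAm'.div (he.comp hXm')).sub
      ((measurable_const.sub hAm').div
        (measurable_const.sub (he.comp hXm')))).stronglyMeasurable
  have hμsm : StronglyMeasurable[(MeasurableSpace.comap X inferInstance) ⊔ (MeasurableSpace.comap A inferInstance)] μf :=
    ((hAm'.mul (hm₁.comp hXm')).add
      ((measurable_const.sub hAm').mul (hm₀.comp hXm'))).stronglyMeasurable
  have hcsm' : StronglyMeasurable[(MeasurableSpace.comap X inferInstance) ⊔ (MeasurableSpace.comap A inferInstance)] c :=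
    ((hm₁.comp hXm').sub (hm₀.comp hXm')).stronglyMeasurable
  have hcsmX : StronglyMeasurable[(MeasurableSpace.comap X inferInstance)] c :=
    ((hm₁.comp hXmX).sub (hm₀.comp hXmX)).stronglyMeasurable
  have hμcond : P[μf | (MeasurableSpace.comap X inferInstance) ⊔ (MeasurableSpace.comap A inferInstance)] = μf :=
    condExp_of_stronglyMeasurable hm'_le hμsm hμint
  have hYμcond : P[(fun ω => Y ω - μf ω) | (MeasurableSpace.comap X inferInstance) ⊔ (MeasurableSpace.comap A inferInstance)] =ᵐ[P] fun _ => (0 : ℝ) := by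
    have hsub : P[Y - μf | (MeasurableSpace.comap X inferInstance) ⊔ (MeasurableSpace.comap A inferInstance)] =ᵐ[P] P[Y | (MeasurableSpace.comap X inferInstance) ⊔ (MeasurableSpace.comap A inferInstance)] - P[μf | (MeasurableSpace.comap X inferInstance) ⊔ (MeasurableSpace.comap A inferInstance)] :=
      condExp_sub hYint hμint _
    refine hsub.trans ?_
    filter_upwards [hm] with ω hω
    simp [Pi.sub_apply, hμcond, ← hω]
  have hpull : P[W * (fun ω => Y ω - μf ω) | (MeasurableSpace.comap X inferInstance) ⊔ (MeasurableSpace.comap A inferInstance)]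
      =ᵐ[P] W * P[(fun ω => Y ω - μf ω) | (MeasurableSpace.comap X inferInstance) ⊔ (MeasurableSpace.comap A inferInstance)] :=
    condExp_mul_of_stronglyMeasurable_left hWsm hWYint hYμint
  have hzero : P[(fun ω => W ω * (Y ω - μf ω)) | (MeasurableSpace.comap X inferInstance) ⊔ (MeasurableSpace.comap A inferInstance)] =ᵐ[P] fun _ => (0 : ℝ) := by
    refine hpull.trans ?_
    filter_upwards [hYμcond] with ω hω
    simp [Pi.mul_apply, hω]
  have hccond' : P[c | (MeasurableSpace.comap X inferInstance) ⊔ (MeasurableSpace.comap A inferInstance)] = c :=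
    condExp_of_stronglyMeasurable hm'_le hcsm' hcint
  have hcX : P[c | (MeasurableSpace.comap X inferInstance)] = c := condExp_of_stronglyMeasurable hmX_le hcsmX hcint
  have hYDRsplit : YDR = fun ω => W ω * (Y ω - μf ω) + c ω := by
    funext ω; simp only [hYDRdef, hW_def, hc_def, hμf_def]; ring
  have hcond1 : P[YDR | (MeasurableSpace.comap X inferInstance) ⊔ (MeasurableSpace.comap A inferInstance)] =ᵐ[P] c := by
    rw [hYDRsplit]
    refine (condExp_add hWYint hcint _).trans ?_
    filter_upwards [hzero] with ω hω
    simp [Pi.add_apply, hccond', hω]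
  have hfinal1 : P[YDR | (MeasurableSpace.comap X inferInstance)] =ᵐ[P] c := by
    have ht := condExp_condExp_of_le (μ := P) (f := YDR) (le_sup_left : (MeasurableSpace.comap X inferInstance) ≤ (MeasurableSpace.comap X inferInstance) ⊔ (MeasurableSpace.comap A inferInstance)) hm'_le
    refine ht.symm.trans ?_
    refine (condExp_congr_ae hcond1).trans ?_
    rw [hcX]
  refine ⟨hfinal1, ?_⟩
  rw [← integral_condExp hmX_le (f := YDR)]
  exact integral_congr_ae hfinal1
end

section
/- Let (Ω, F, P) be a probability space, X : Ω → 𝒳 a random element in a measurable space, A : Ω → {0,1} a binary random variable, and Y(0), Y(1) : Ω → ℝ integrable potential outcomes with observed outcome Y = A·Y(1) + (1−A)·Y(0). Assume positivity (the propensity e(X), a version of E[A | σ(X)], satisfies 0 < e(X) < 1 a.s.) and unconfoundedness ((Y(0), Y(1)) conditionally independent of A given σ(X)). Let m₀, m₁ : 𝒳 → ℝ be measurable with A·m₁(X) + (1−A)·m₀(X) a version of E[Y | σ(X,A)], and assume the AIPW pseudo-outcome Ŷ^{AIPW} = (A/e(X) − (1−A)/(1−e(X)))·(Y − (A·m₁(X)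 + (1−A)·m₀(X))) + m₁(X) − m₀(X) is integrable. Then E[Ŷ^{AIPW}] = E[Y(1) − Y(0)] = θ_ATE, i.e., the AIPW pseudo-outcome constructed from the true nuisances is an unbiased score for the average treatment effect. -/
open MeasureTheory Filter
open scoped ENNReal Topology

section AIPWAux

variable {Ω 𝒳 : Type*} [MeasurableSpace Ω] [m𝒳 : MeasurableSpace 𝒳]

/-- A bounded measurable function is integrable w.r.t. a finite measure. -/
lemma aipw_integrable_of_bdd (P : Measure Ω) [IsFiniteMeasure P] {f : Ω → ℝ}
    (hf : Measurable f) (C : ℝ) (h : ∀ ω, |f ω| ≤ C) : Integrable f P := by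
  refine Integrable.mono' (integrable_const C) hf.aestronglyMeasurable
    (Filter.Eventually.of_forall fun ω => ?_)
  simpa [Real.norm_eq_abs] using h ω

lemma aipw_clamp_abs_le_abs (n : ℕ) (y : ℝ) : |max (-(n : ℝ)) (min y n)| ≤ |y| := by
  have hn : (0 : ℝ) ≤ n := n.cast_nonneg
  rw [abs_le]
  constructor
  · rcases le_total y (n : ℝ) with h | h
    · rw [min_eq_left h]
      exact le_trans (neg_abs_le y) (le_max_right _ _)
    · rw [min_eq_right h]
      refine le_trans ?_ (le_max_right _ _)
      exact le_trans (neg_nonpos_of_nonneg (abs_nonneg y)) hn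
  · refine max_le ?_ ?_
    · exact le_trans (neg_nonpos_of_nonneg hn) (abs_nonneg y)
    · exact le_trans (min_le_left _ _) (le_abs_self y)

lemma aipw_clamp_abs_le_n (n : ℕ) (y : ℝ) : |max (-(n : ℝ)) (min y n)| ≤ n := by
  have hn : (0 : ℝ) ≤ n := n.cast_nonneg
  rw [abs_le]
  refine ⟨le_max_left _ _, max_le (le_trans (neg_nonpos_of_nonneg hn) hn) (min_le_right _ _)⟩

lemma aipw_clamp_tendsto (y : ℝ) :
    Tendsto (fun n : ℕ => max (-(n : ℝ)) (min y n)) atTop (𝓝 y) := by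
  have hev : ∀ᶠ n : ℕ in atTop, |y| ≤ (n : ℝ) := by
    rcases exists_nat_ge |y| with ⟨N, hN⟩
    filter_upwards [eventually_ge_atTop N] with n hn
    exact hN.trans (by exact_mod_cast hn)
  refine Tendsto.congr' ?_ (tendsto_const_nhds (x := y))
  filter_upwards [hev] with n hn
  have h1 : y ≤ (n : ℝ) := le_trans (le_abs_self y) hn
  have h2 : -(n : ℝ) ≤ y := by
    have := neg_le_neg hn
    exact le_trans this (neg_abs_le y)
  rw [min_eq_left h1, max_eq_right h2]

lemma aipw_clamp_measurable (n : ℕ) : Measurable (fun y : ℝ => max (-(n : ℝ)) (min y n)) :=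
  measurable_const.max (measurable_id.min measurable_const)

/-- Pull-out of a bounded `σ(X)`-measurable factor under the total integral of a
conditional expectation given `σ(X)`. -/
lemma aipw_pullout_integral (P : Measure Ω) [IsProbabilityMeasure P]
    (X : Ω → 𝒳) (hX : Measurable X)
    (φ : 𝒳 → ℝ) (hφ : Measurable φ) (hφbd : ∀ᵐ ω ∂P, |φ (X ω)| ≤ 1)
    (ψ : Ω → ℝ) (hψ : Integrable ψ P) :
    ∫ ω, φ (X ω) * (P[ψ | MeasurableSpace.comap X m𝒳]) ω ∂P
      = ∫ ω, φ (X ω) * ψ ω ∂P := by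
  have hmle : MeasurableSpace.comap X m𝒳 ≤ _ := hX.comap_le
  have hsm : StronglyMeasurable[MeasurableSpace.comap X m𝒳] (fun ω => φ (X ω)) :=
    (hφ.comp (Measurable.of_comap_le le_rfl)).stronglyMeasurable
  have hint : Integrable ((fun ω => φ (X ω)) * ψ) P := by
    refine hψ.bdd_mul (c := 1) ((hφ.comp hX)).aestronglyMeasurable ?_
    simpa [Real.norm_eq_abs] using hφbd
  have hpull := condExp_mul_of_stronglyMeasurable_left (μ := P) hsm hint hψ
  calc ∫ ω, φ (X ω) * (P[ψ | MeasurableSpace.comap X m𝒳]) ω ∂P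
      = ∫ ω, (P[(fun ω => φ (X ω)) * ψ | MeasurableSpace.comap X m𝒳]) ω ∂P := by
        refine (integral_congr_ae ?_).symm
        filter_upwards [hpull] with ω hω
        simpa using hω
    _ = ∫ ω, ((fun ω => φ (X ω)) * ψ) ω ∂P := integral_condExp hmle
    _ = ∫ ω, φ (X ω) * ψ ω ∂P := rfl

/-- Set-integral version of the pull-out property, over sets `X ⁻¹' t`. -/
lemma aipw_pullout_setIntegral (P : Measure Ω) [IsProbabilityMeasure P]
    (X : Ω → 𝒳) (hX : Measurable X)
    (t : Set 𝒳) (ht : MeasurableSet t)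
    (ε : 𝒳 → ℝ) (hε : Measurable ε) (hεbd : ∀ᵐ ω ∂P, |ε (X ω)| ≤ 1)
    (ψ : Ω → ℝ) (hψ : Integrable ψ P) :
    ∫ ω in X ⁻¹' t, ε (X ω) * (P[ψ | MeasurableSpace.comap X m𝒳]) ω ∂P
      = ∫ ω in X ⁻¹' t, ε (X ω) * ψ ω ∂P := by
  have hφ : Measurable (t.indicator ε) := hε.indicator ht
  have hφbd : ∀ᵐ ω ∂P, |t.indicator ε (X ω)| ≤ 1 := by
    filter_upwards [hεbd] with ω hω
    by_cases h : X ω ∈ t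
    · simpa [Set.indicator_of_mem h] using hω
    · simp [Set.indicator_of_notMem h]
  have key := aipw_pullout_integral P X hX (t.indicator ε) hφ hφbd ψ hψ
  have hs : MeasurableSet (X ⁻¹' t) := hX ht
  have conv : ∀ F : Ω → ℝ,
      ∫ ω, t.indicator ε (X ω) * F ω ∂P = ∫ ω in X ⁻¹' t, ε (X ω) * F ω ∂P := by
    intro F
    rw [← integral_indicator hs]
    congr 1
    funext ω
    by_cases h : X ω ∈ t
    · simp [Set.indicator_of_mem h, Set.indicator_of_mem (Set.mem_preimage.2 h)]
    · simp [Set.indicator_of_notMem h,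
        Set.indicator_of_notMem (fun hh => h (Set.mem_preimage.1 hh))]
  rw [← conv, ← conv, key]

/-- Main auxiliary lemma: identification of the outcome regression with the
conditional expectation of the potential outcome. -/
lemma aipw_aux (P : Measure Ω) [IsProbabilityMeasure P]
    (X : Ω → 𝒳) (hX : Measurable X)
    (B : Ω → ℝ) (hB : Measurable B) (hB01 : ∀ ω, B ω = 0 ∨ B ω = 1)
    (Y' : Ω → ℝ) (hY'm : Measurable Y') (hY'int : Integrable Y' P)
    (ε : 𝒳 → ℝ) (hε : Measurable ε)
    (hεbd : ∀ᵐ ω ∂P, 0 < ε (X ω) ∧ ε (X ω) ≤ 1)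
    (hunc : ∀ n : ℕ,
      P[fun ω => (max (-(n : ℝ)) (min (Y' ω) (n : ℝ))) * B ω |
          MeasurableSpace.comap X m𝒳] =ᵐ[P]
        fun ω =>
          (P[fun ω' => max (-(n : ℝ)) (min (Y' ω') (n : ℝ)) |
              MeasurableSpace.comap X m𝒳]) ω * ε (X ω))
    (m : 𝒳 → ℝ) (hmm : Measurable m)
    (hBm : Integrable (fun ω => B ω * m (X ω)) P)
    (hεX : (fun ω => ε (X ω)) =ᵐ[P] P[B | MeasurableSpace.comap X m𝒳])
    (hcond : P[fun ω => B ω * Y' ω | MeasurableSpace.comap X m𝒳] =ᵐ[P]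
      P[fun ω => B ω * m (X ω) | MeasurableSpace.comap X m𝒳]) :
    (fun ω => m (X ω)) =ᵐ[P] P[Y' | MeasurableSpace.comap X m𝒳] := by
  have hmle : MeasurableSpace.comap X m𝒳 ≤ _ := hX.comap_le
  have hBbd : ∀ ω, |B ω| ≤ 1 := by
    intro ω; rcases hB01 ω with h | h <;> simp [h]
  have hBint : Integrable B P := aipw_integrable_of_bdd P hB 1 hBbd
  have hBY'int : Integrable (fun ω => B ω * Y' ω) P :=
    hY'int.bdd_mul (c := 1) hB.aestronglyMeasurable
      (Filter.Eventually.of_forall fun ω => by simpa [Real.norm_eq_abs] using hBbd ω)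
  have hmXmeas : Measurable[MeasurableSpace.comap X m𝒳] (fun ω => m (X ω)) :=
    hmm.comp (Measurable.of_comap_le le_rfl)
  have hεXmeas : Measurable[MeasurableSpace.comap X m𝒳] (fun ω => ε (X ω)) :=
    hε.comp (Measurable.of_comap_le le_rfl)
  -- Step I : m(X)·ε(X) = E[B·Y' | σ(X)] a.e.
  have hmBint : Integrable ((fun ω => m (X ω)) * B) P :=
    hBm.congr (Filter.Eventually.of_forall fun ω => mul_comm (B ω) (m (X ω)))
  have hpull := condExp_mul_of_stronglyMeasurable_left (μ := P)
    hmXmeas.stronglyMeasurable hmBint hBint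
  have hstep1 : (fun ω => m (X ω) * ε (X ω)) =ᵐ[P] P[fun ω => B ω * Y' ω | MeasurableSpace.comap X m𝒳] := by
    have h1 : (fun ω => B ω * m (X ω)) = ((fun ω => m (X ω)) * B) :=
      funext fun ω => mul_comm _ _
    refine EventuallyEq.symm ?_
    calc P[fun ω => B ω * Y' ω | MeasurableSpace.comap X m𝒳]
        =ᵐ[P] P[(fun ω => m (X ω)) * B | MeasurableSpace.comap X m𝒳] := by rw [← h1]; exact hcond
      _ =ᵐ[P] (fun ω => m (X ω)) * P[B | MeasurableSpace.comap X m𝒳] := hpull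
      _ =ᵐ[P] fun ω => m (X ω) * ε (X ω) := by
          filter_upwards [hεX] with ω hω
          simp [← hω]
  -- Step II : ε(X)·E[Y'|σ(X)] = E[B·Y'|σ(X)] a.e.
  have hεabs : ∀ᵐ ω ∂P, |ε (X ω)| ≤ 1 := by
    filter_upwards [hεbd] with ω hω
    rw [abs_of_pos hω.1]; exact hω.2
  have hgint : Integrable (fun ω => ε (X ω) * (P[Y' | MeasurableSpace.comap X m𝒳]) ω) P :=
    integrable_condExp.bdd_mul (c := 1) ((hε.comp hX)).aestronglyMeasurable
      (by simpa [Real.norm_eq_abs] using hεabs)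
  have hstep2 : (fun ω => ε (X ω) * (P[Y' | MeasurableSpace.comap X m𝒳]) ω) =ᵐ[P]
      P[fun ω => B ω * Y' ω | MeasurableSpace.comap X m𝒳] := by
    refine ae_eq_condExp_of_forall_setIntegral_eq hmle hBY'int
      (fun s _ _ => hgint.integrableOn) (fun s hs _ => ?_) ?_
    · obtain ⟨t, ht, rfl⟩ := hs
      -- goal : ∫ in X⁻¹'t, ε(X)·E[Y'|σ(X)] = ∫ in X⁻¹'t, B·Y'
      have h1 : ∫ ω in X ⁻¹' t, ε (X ω) * (P[Y' | MeasurableSpace.comap X m𝒳]) ω ∂P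
          = ∫ ω in X ⁻¹' t, ε (X ω) * Y' ω ∂P :=
        aipw_pullout_setIntegral P X hX t ht ε hε hεabs Y' hY'int
      have hsmX : MeasurableSet[MeasurableSpace.comap X m𝒳] (X ⁻¹' t) := ⟨t, ht, rfl⟩
      have hsamb : MeasurableSet (X ⁻¹' t) := hX ht
      -- per-n identity
      have key : ∀ n : ℕ,
          ∫ ω in X ⁻¹' t, B ω * (max (-(n : ℝ)) (min (Y' ω) (n : ℝ))) ∂P
            = ∫ ω in X ⁻¹' t, ε (X ω) * (max (-(n : ℝ)) (min (Y' ω) (n : ℝ))) ∂P := by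
        intro n
        have hFmeas : Measurable (fun ω => max (-(n : ℝ)) (min (Y' ω) (n : ℝ))) :=
          (aipw_clamp_measurable n).comp hY'm
        have hFint : Integrable (fun ω => max (-(n : ℝ)) (min (Y' ω) (n : ℝ))) P :=
          aipw_integrable_of_bdd P hFmeas n (fun ω => aipw_clamp_abs_le_n n (Y' ω))
        have hFBint : Integrable
            (fun ω => (max (-(n : ℝ)) (min (Y' ω) (n : ℝ))) * B ω) P :=
          hFint.bdd_mul (c := 1) hB.aestronglyMeasurable
            (Filter.Eventually.of_forall fun ω => by simpa [Real.norm_eq_abs] using hBbd ω) |>.congr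
            (Filter.Eventually.of_forall fun ω => mul_comm _ _)
        calc ∫ ω in X ⁻¹' t, B ω * (max (-(n : ℝ)) (min (Y' ω) (n : ℝ))) ∂P
            = ∫ ω in X ⁻¹' t, (max (-(n : ℝ)) (min (Y' ω) (n : ℝ))) * B ω ∂P := by
              refine setIntegral_congr_ae hsamb ?_
              exact Filter.Eventually.of_forall fun ω _ => mul_comm _ _
          _ = ∫ ω in X ⁻¹' t,
                (P[fun ω => (max (-(n : ℝ)) (min (Y' ω) (n : ℝ))) * B ω | MeasurableSpace.comap X m𝒳]) ω ∂P :=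
              (setIntegral_condExp hmle hFBint hsmX).symm
          _ = ∫ ω in X ⁻¹' t,
                (P[fun ω' => max (-(n : ℝ)) (min (Y' ω') (n : ℝ)) | MeasurableSpace.comap X m𝒳]) ω * ε (X ω) ∂P := by
              refine setIntegral_congr_ae hsamb ?_
              filter_upwards [hunc n] with ω hω _
              exact hω
          _ = ∫ ω in X ⁻¹' t,
                ε (X ω) * (P[fun ω' => max (-(n : ℝ)) (min (Y' ω') (n : ℝ)) | MeasurableSpace.comap X m𝒳]) ω ∂P := by
              refine setIntegral_congr_ae hsamb ?_
              exact Filter.Eventually.of_forall fun ω _ => mul_comm _ _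
          _ = ∫ ω in X ⁻¹' t, ε (X ω) * (max (-(n : ℝ)) (min (Y' ω) (n : ℝ))) ∂P :=
              aipw_pullout_setIntegral P X hX t ht ε hε hεabs _ hFint
      -- pass to the limit
      have hboundint : Integrable (fun ω => |Y' ω|) (P.restrict (X ⁻¹' t)) :=
        hY'int.abs.restrict
      have hL : Tendsto
          (fun n : ℕ => ∫ ω in X ⁻¹' t, B ω * (max (-(n : ℝ)) (min (Y' ω) (n : ℝ))) ∂P)
          atTop (𝓝 (∫ ω in X ⁻¹' t, B ω * Y' ω ∂P)) := by
        refine tendsto_integral_of_dominated_convergence (fun ω => |Y' ω|)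
          (fun n => (hB.mul ((aipw_clamp_measurable n).comp hY'm)).aestronglyMeasurable)
          hboundint (fun n => ?_) ?_
        · refine Filter.Eventually.of_forall fun ω => ?_
          rw [Real.norm_eq_abs, abs_mul]
          calc |B ω| * |max (-(n : ℝ)) (min (Y' ω) (n : ℝ))|
              ≤ 1 * |Y' ω| := mul_le_mul (hBbd ω) (aipw_clamp_abs_le_abs n (Y' ω))
                (abs_nonneg _) zero_le_one
            _ = |Y' ω| := one_mul _
        · exact Filter.Eventually.of_forall fun ω =>
            (aipw_clamp_tendsto (Y' ω)).const_mul (B ω)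
      have hR : Tendsto
          (fun n : ℕ => ∫ ω in X ⁻¹' t, ε (X ω) * (max (-(n : ℝ)) (min (Y' ω) (n : ℝ))) ∂P)
          atTop (𝓝 (∫ ω in X ⁻¹' t, ε (X ω) * Y' ω ∂P)) := by
        refine tendsto_integral_of_dominated_convergence (fun ω => |Y' ω|)
          (fun n => ((hε.comp hX).mul ((aipw_clamp_measurable n).comp hY'm)).aestronglyMeasurable)
          hboundint (fun n => ?_) ?_
        · refine ae_restrict_of_ae ?_
          filter_upwards [hεabs] with ω hω
          rw [Real.norm_eq_abs, abs_mul]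
          calc |ε (X ω)| * |max (-(n : ℝ)) (min (Y' ω) (n : ℝ))|
              ≤ 1 * |Y' ω| := mul_le_mul hω (aipw_clamp_abs_le_abs n (Y' ω))
                (abs_nonneg _) zero_le_one
            _ = |Y' ω| := one_mul _
        · exact Filter.Eventually.of_forall fun ω =>
            (aipw_clamp_tendsto (Y' ω)).const_mul (ε (X ω))
      have h2 : ∫ ω in X ⁻¹' t, B ω * Y' ω ∂P = ∫ ω in X ⁻¹' t, ε (X ω) * Y' ω ∂P := by
        refine tendsto_nhds_unique hL ?_
        refine hR.congr fun n => ?_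
        exact (key n).symm
      rw [h1, ← h2]
    · exact ((hεXmeas.stronglyMeasurable.mul stronglyMeasurable_condExp)).aestronglyMeasurable
  -- conclude by cancelling ε(X) > 0
  filter_upwards [hstep1, hstep2, hεbd] with ω h1 h2 h3
  have : ε (X ω) * m (X ω) = ε (X ω) * (P[Y' | MeasurableSpace.comap X m𝒳]) ω := by
    rw [mul_comm (ε (X ω)) (m (X ω)), h1, ← h2]
  exact mul_left_cancel₀ (ne_of_gt h3.1) this

end AIPWAux

/-- **Unbiasedness of the AIPW score for the average treatment effect.** Under
consistency (`Y = A·Y(1) + (1−A)·Y(0)`), positivity (`0 < e(X) < 1` a.s. for the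
propensity `e(X)`, a version of `E[A | σ(X)]`), and unconfoundedness
(`(Y(0),Y(1)) ⫫ A | σ(X)`, expressed via bounded measurable test functions), if
`A·m₁(X) + (1−A)·m₀(X)` is a version of `E[Y | σ(X,A)]` and the AIPW pseudo-outcome
`Ŷ^AIPW = (A/e(X) − (1−A)/(1−e(X)))·(Y − (A·m₁(X)+(1−A)·m₀(X))) + m₁(X) − m₀(X)`
is integrable, then `E[Ŷ^AIPW] = E[Y(1) − Y(0)] = θ_ATE`. -/
theorem aipw_unbiased_for_ate
    {Ω 𝒳 : Type*} [MeasurableSpace Ω] [MeasurableSpace 𝒳]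
    (P : Measure Ω) [IsProbabilityMeasure P]
    (X : Ω → 𝒳) (hX : Measurable X)
    (A : Ω → ℝ) (hA : Measurable A) (hA01 : ∀ ω, A ω = 0 ∨ A ω = 1)
    (Y0 Y1 : Ω → ℝ) (hY0 : Measurable Y0) (hY1 : Measurable Y1)
    (hY0int : Integrable Y0 P) (hY1int : Integrable Y1 P)
    (Y : Ω → ℝ)
    (hYdef : Y = fun ω => A ω * Y1 ω + (1 - A ω) * Y0 ω)
    (e : 𝒳 → ℝ) (he : Measurable e)
    (heX : (fun ω => e (X ω)) =ᵐ[P] P[A | MeasurableSpace.comap X inferInstance])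
    (he01 : ∀ᵐ ω ∂P, 0 < e (X ω) ∧ e (X ω) < 1)
    -- unconfoundedness: (Y(0), Y(1)) ⫫ A given σ(X)
    (huncf : ∀ (f : ℝ × ℝ → ℝ) (g : ℝ → ℝ), Measurable f → Measurable g →
      (∃ C, ∀ p, |f p| ≤ C) → (∃ C, ∀ a, |g a| ≤ C) →
      P[fun ω => f (Y0 ω, Y1 ω) * g (A ω) |
          MeasurableSpace.comap X inferInstance] =ᵐ[P]
        fun ω =>
          (P[fun ω' => f (Y0 ω', Y1 ω') |
              MeasurableSpace.comap X inferInstance]) ω *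
          (P[fun ω' => g (A ω') | MeasurableSpace.comap X inferInstance]) ω)
    (m₀ m₁ : 𝒳 → ℝ) (hm₀ : Measurable m₀) (hm₁ : Measurable m₁)
    (hm : (fun ω => A ω * m₁ (X ω) + (1 - A ω) * m₀ (X ω)) =ᵐ[P]
      P[Y | MeasurableSpace.comap X inferInstance ⊔
            MeasurableSpace.comap A inferInstance])
    (YAIPW : Ω → ℝ)
    (hYAIPWdef : YAIPW = fun ω =>
      (A ω / e (X ω) - (1 - A ω) / (1 - e (X ω))) *
        (Y ω - (A ω * m₁ (X ω) + (1 - A ω) * m₀ (X ω))) + m₁ (X ω) - m₀ (X ω))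
    (hYAIPWint : Integrable YAIPW P) :
    ∫ ω, YAIPW ω ∂P = ∫ ω, (Y1 ω - Y0 ω) ∂P := by
  have hmXle : (MeasurableSpace.comap X inferInstance) ≤ _ := hX.comap_le
  have hm2le : ((MeasurableSpace.comap X inferInstance ⊔ MeasurableSpace.comap A inferInstance) : MeasurableSpace Ω) ≤ _ := sup_le hX.comap_le hA.comap_le
  have hAbd : ∀ ω, |A ω| ≤ 1 := fun ω => by rcases hA01 ω with h | h <;> simp [h]
  have hA0bd : ∀ ω, |1 - A ω| ≤ 1 := fun ω => by rcases hA01 ω with h | h <;> simp [h]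
  have hAint : Integrable A P := aipw_integrable_of_bdd P hA 1 hAbd
  have hYint : Integrable Y P := by
    rw [hYdef]
    exact (hY1int.bdd_mul (c := 1) hA.aestronglyMeasurable
        (Filter.Eventually.of_forall fun ω => by simpa [Real.norm_eq_abs] using hAbd ω)).add
      (hY0int.bdd_mul (c := 1) (measurable_const.sub hA).aestronglyMeasurable
        (Filter.Eventually.of_forall fun ω => by simpa [Real.norm_eq_abs] using hA0bd ω))
  have hMint : Integrable (fun ω => A ω * m₁ (X ω) + (1 - A ω) * m₀ (X ω)) P :=
    integrable_condExp.congr hm.symm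
  have hA_m2 : Measurable[(MeasurableSpace.comap X inferInstance ⊔ MeasurableSpace.comap A inferInstance)] A := (Measurable.of_comap_le le_rfl).mono le_sup_right le_rfl
  have hm1_m2 : Measurable[(MeasurableSpace.comap X inferInstance ⊔ MeasurableSpace.comap A inferInstance)] (fun ω => m₁ (X ω)) :=
    (hm₁.comp (Measurable.of_comap_le le_rfl) : Measurable[(MeasurableSpace.comap X inferInstance)] _).mono le_sup_left le_rfl
  have hm0_m2 : Measurable[(MeasurableSpace.comap X inferInstance ⊔ MeasurableSpace.comap A inferInstance)] (fun ω => m₀ (X ω)) :=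
    (hm₀.comp (Measurable.of_comap_le le_rfl) : Measurable[(MeasurableSpace.comap X inferInstance)] _).mono le_sup_left le_rfl
  have he_m2 : Measurable[(MeasurableSpace.comap X inferInstance ⊔ MeasurableSpace.comap A inferInstance)] (fun ω => e (X ω)) :=
    (he.comp (Measurable.of_comap_le le_rfl) : Measurable[(MeasurableSpace.comap X inferInstance)] _).mono le_sup_left le_rfl
  -- pointwise identities from A ∈ {0,1}
  have hAm : ∀ ω, A ω * m₁ (X ω) = A ω * (A ω * m₁ (X ω) + (1 - A ω) * m₀ (X ω)) :=
    fun ω => by rcases hA01 ω with h | h <;> simp [h]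
  have hAm0 : ∀ ω, (1 - A ω) * m₀ (X ω)
      = (1 - A ω) * (A ω * m₁ (X ω) + (1 - A ω) * m₀ (X ω)) :=
    fun ω => by rcases hA01 ω with h | h <;> simp [h]
  have hAY : (fun ω => A ω * Y1 ω) = fun ω => A ω * Y ω := by
    rw [hYdef]; funext ω; rcases hA01 ω with h | h <;> simp [h]
  have hAY0 : (fun ω => (1 - A ω) * Y0 ω) = fun ω => (1 - A ω) * Y ω := by
    rw [hYdef]; funext ω; rcases hA01 ω with h | h <;> simp [h]
  have hAYint : Integrable (fun ω => A ω * Y ω) P :=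
    hYint.bdd_mul (c := 1) hA.aestronglyMeasurable
      (Filter.Eventually.of_forall fun ω => by simpa [Real.norm_eq_abs] using hAbd ω)
  have hA0Yint : Integrable (fun ω => (1 - A ω) * Y ω) P :=
    hYint.bdd_mul (c := 1) (measurable_const.sub hA).aestronglyMeasurable
      (Filter.Eventually.of_forall fun ω => by simpa [Real.norm_eq_abs] using hA0bd ω)
  -- inner conditional expectations given σ(X,A)
  have hinner1 : P[fun ω => A ω * Y ω | (MeasurableSpace.comap X inferInstance ⊔ MeasurableSpace.comap A inferInstance)] =ᵐ[P] fun ω => A ω * m₁ (X ω) := by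
    have hp := condExp_mul_of_stronglyMeasurable_left (μ := P) hA_m2.stronglyMeasurable
      (show Integrable (A * Y) P from hAYint) hYint
    refine EventuallyEq.trans (show P[fun ω => A ω * Y ω | (MeasurableSpace.comap X inferInstance ⊔ MeasurableSpace.comap A inferInstance)] =ᵐ[P] A * P[Y | (MeasurableSpace.comap X inferInstance ⊔ MeasurableSpace.comap A inferInstance)] from hp) ?_
    filter_upwards [hm] with ω hω
    have hω' : A ω * m₁ (X ω) + (1 - A ω) * m₀ (X ω) = (P[Y | (MeasurableSpace.comap X inferInstance ⊔ MeasurableSpace.comap A inferInstance)]) ω := hω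
    show A ω * (P[Y | (MeasurableSpace.comap X inferInstance ⊔ MeasurableSpace.comap A inferInstance)]) ω = A ω * m₁ (X ω)
    rw [← hω']
    exact (hAm ω).symm
  have hinner0 : P[fun ω => (1 - A ω) * Y ω | (MeasurableSpace.comap X inferInstance ⊔ MeasurableSpace.comap A inferInstance)] =ᵐ[P] fun ω => (1 - A ω) * m₀ (X ω) := by
    have hp := condExp_mul_of_stronglyMeasurable_left (μ := P)
      (measurable_const.sub hA_m2).stronglyMeasurable
      (show Integrable ((fun ω => 1 - A ω) * Y) P from hA0Yint) hYint
    refine EventuallyEq.trans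
      (show P[fun ω => (1 - A ω) * Y ω | (MeasurableSpace.comap X inferInstance ⊔ MeasurableSpace.comap A inferInstance)] =ᵐ[P] (fun ω => 1 - A ω) * P[Y | (MeasurableSpace.comap X inferInstance ⊔ MeasurableSpace.comap A inferInstance)] from hp) ?_
    filter_upwards [hm] with ω hω
    have hω' : A ω * m₁ (X ω) + (1 - A ω) * m₀ (X ω) = (P[Y | (MeasurableSpace.comap X inferInstance ⊔ MeasurableSpace.comap A inferInstance)]) ω := hω
    show (1 - A ω) * (P[Y | (MeasurableSpace.comap X inferInstance ⊔ MeasurableSpace.comap A inferInstance)]) ω = (1 - A ω) * m₀ (X ω)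
    rw [← hω']
    exact (hAm0 ω).symm
  have hcond1 : P[fun ω => A ω * Y1 ω | (MeasurableSpace.comap X inferInstance)] =ᵐ[P] P[fun ω => A ω * m₁ (X ω) | (MeasurableSpace.comap X inferInstance)] := by
    rw [hAY]
    calc P[fun ω => A ω * Y ω | (MeasurableSpace.comap X inferInstance)]
        =ᵐ[P] P[P[fun ω => A ω * Y ω | (MeasurableSpace.comap X inferInstance ⊔ MeasurableSpace.comap A inferInstance)] | (MeasurableSpace.comap X inferInstance)] :=
          (condExp_condExp_of_le le_sup_left hm2le).symm
      _ =ᵐ[P] P[fun ω => A ω * m₁ (X ω) | (MeasurableSpace.comap X inferInstance)] := condExp_congr_ae hinner1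
  have hcond0 : P[fun ω => (1 - A ω) * Y0 ω | (MeasurableSpace.comap X inferInstance)] =ᵐ[P]
      P[fun ω => (1 - A ω) * m₀ (X ω) | (MeasurableSpace.comap X inferInstance)] := by
    rw [hAY0]
    calc P[fun ω => (1 - A ω) * Y ω | (MeasurableSpace.comap X inferInstance)]
        =ᵐ[P] P[P[fun ω => (1 - A ω) * Y ω | (MeasurableSpace.comap X inferInstance ⊔ MeasurableSpace.comap A inferInstance)] | (MeasurableSpace.comap X inferInstance)] :=
          (condExp_condExp_of_le le_sup_left hm2le).symm
      _ =ᵐ[P] P[fun ω => (1 - A ω) * m₀ (X ω) | (MeasurableSpace.comap X inferInstance)] := condExp_congr_ae hinner0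
  -- integrability of B·m(X)
  have hBm1 : Integrable (fun ω => A ω * m₁ (X ω)) P :=
    (hMint.bdd_mul (c := 1) hA.aestronglyMeasurable
      (Filter.Eventually.of_forall fun ω => by simpa [Real.norm_eq_abs] using hAbd ω)).congr
      (Filter.Eventually.of_forall fun ω => (hAm ω).symm)
  have hBm0 : Integrable (fun ω => (1 - A ω) * m₀ (X ω)) P :=
    (hMint.bdd_mul (c := 1) (measurable_const.sub hA).aestronglyMeasurable
      (Filter.Eventually.of_forall fun ω => by simpa [Real.norm_eq_abs] using hA0bd ω)).congr
      (Filter.Eventually.of_forall fun ω => (hAm0 ω).symm)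
  -- propensity of the control arm
  have heX0 : (fun ω => 1 - e (X ω)) =ᵐ[P] P[fun ω => 1 - A ω | (MeasurableSpace.comap X inferInstance)] := by
    have hsub := condExp_sub (μ := P) (m := (MeasurableSpace.comap X inferInstance)) (integrable_const (1 : ℝ)) hAint
    have hre : ((fun _ : Ω => (1 : ℝ)) - A) = fun ω => 1 - A ω := rfl
    rw [hre] at hsub
    have hconst := condExp_const (μ := P) hmXle (1 : ℝ)
    filter_upwards [hsub, heX] with ω h1 h2
    have h1' : (P[fun ω => 1 - A ω | (MeasurableSpace.comap X inferInstance)]) ω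
        = (P[fun _ : Ω => (1 : ℝ) | (MeasurableSpace.comap X inferInstance)]) ω - (P[A | (MeasurableSpace.comap X inferInstance)]) ω := h1
    have h2' : e (X ω) = (P[A | (MeasurableSpace.comap X inferInstance)]) ω := h2
    rw [h1', hconst, ← h2']
  have he01' : ∀ᵐ ω ∂P, 0 < e (X ω) ∧ e (X ω) ≤ 1 :=
    he01.mono fun ω h => ⟨h.1, le_of_lt h.2⟩
  have he01'' : ∀ᵐ ω ∂P, 0 < 1 - e (X ω) ∧ 1 - e (X ω) ≤ 1 :=
    he01.mono fun ω h => ⟨by linarith [h.2], by linarith [h.1]⟩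
  -- unconfoundedness, instantiated at truncations
  have hgA : (fun ω => max 0 (min (A ω) 1)) = A :=
    funext fun ω => by rcases hA01 ω with h | h <;> simp [h]
  have hgA0 : (fun ω => 1 - max 0 (min (A ω) 1)) = fun ω => 1 - A ω := by
    funext ω; rcases hA01 ω with h | h <;> simp [h]
  have hunc1 : ∀ n : ℕ,
      P[fun ω => (max (-(n : ℝ)) (min (Y1 ω) (n : ℝ))) * A ω | (MeasurableSpace.comap X inferInstance)] =ᵐ[P]
        fun ω => (P[fun ω' => max (-(n : ℝ)) (min (Y1 ω') (n : ℝ)) | (MeasurableSpace.comap X inferInstance)]) ω * e (X ω) := by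
    intro n
    have hf : Measurable (fun p : ℝ × ℝ => max (-(n : ℝ)) (min p.2 (n : ℝ))) :=
      measurable_const.max (measurable_snd.min measurable_const)
    have hg : Measurable (fun a : ℝ => max 0 (min a 1)) :=
      measurable_const.max (measurable_id.min measurable_const)
    have h := huncf (fun p => max (-(n : ℝ)) (min p.2 (n : ℝ))) (fun a => max 0 (min a 1)) hf hg
      ⟨n, fun p => aipw_clamp_abs_le_n n p.2⟩
      ⟨1, fun a => by
        rw [abs_le]
        exact ⟨le_trans (by norm_num) (le_max_left 0 (min a 1)),
          max_le zero_le_one (min_le_right a 1)⟩⟩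
    have h' : P[fun ω => (max (-(n : ℝ)) (min (Y1 ω) (n : ℝ))) * (max 0 (min (A ω) 1)) | (MeasurableSpace.comap X inferInstance)]
        =ᵐ[P] fun ω => (P[fun ω' => max (-(n : ℝ)) (min (Y1 ω') (n : ℝ)) | (MeasurableSpace.comap X inferInstance)]) ω *
          (P[fun ω' => max 0 (min (A ω') 1) | (MeasurableSpace.comap X inferInstance)]) ω := h
    rw [show (fun ω => (max (-(n : ℝ)) (min (Y1 ω) (n : ℝ))) * (max 0 (min (A ω) 1)))
          = fun ω => (max (-(n : ℝ)) (min (Y1 ω) (n : ℝ))) * A ω from by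
        funext ω; rw [congrFun hgA ω],
      show (fun ω' => max 0 (min (A ω') 1)) = A from hgA] at h'
    refine h'.trans ?_
    filter_upwards [heX] with ω hω
    have hω' : e (X ω) = (P[A | (MeasurableSpace.comap X inferInstance)]) ω := hω
    rw [← hω']
  have hunc0 : ∀ n : ℕ,
      P[fun ω => (max (-(n : ℝ)) (min (Y0 ω) (n : ℝ))) * (1 - A ω) | (MeasurableSpace.comap X inferInstance)] =ᵐ[P]
        fun ω => (P[fun ω' => max (-(n : ℝ)) (min (Y0 ω') (n : ℝ)) | (MeasurableSpace.comap X inferInstance)]) ω *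
          (1 - e (X ω)) := by
    intro n
    have hf : Measurable (fun p : ℝ × ℝ => max (-(n : ℝ)) (min p.1 (n : ℝ))) :=
      measurable_const.max (measurable_fst.min measurable_const)
    have hg : Measurable (fun a : ℝ => 1 - max 0 (min a 1)) :=
      measurable_const.sub (measurable_const.max (measurable_id.min measurable_const))
    have h := huncf (fun p => max (-(n : ℝ)) (min p.1 (n : ℝ)))
      (fun a => 1 - max 0 (min a 1)) hf hg
      ⟨n, fun p => aipw_clamp_abs_le_n n p.1⟩
      ⟨1, fun a => by
        have h1 : (0 : ℝ) ≤ max 0 (min a 1) := le_max_left 0 (min a 1)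
        have h2 : max 0 (min a 1) ≤ 1 := max_le zero_le_one (min_le_right a 1)
        show |1 - max 0 (min a 1)| ≤ 1
        rw [abs_le]
        constructor <;> linarith⟩
    have h' : P[fun ω => (max (-(n : ℝ)) (min (Y0 ω) (n : ℝ))) * (1 - max 0 (min (A ω) 1)) | (MeasurableSpace.comap X inferInstance)]
        =ᵐ[P] fun ω => (P[fun ω' => max (-(n : ℝ)) (min (Y0 ω') (n : ℝ)) | (MeasurableSpace.comap X inferInstance)]) ω *
          (P[fun ω' => 1 - max 0 (min (A ω') 1) | (MeasurableSpace.comap X inferInstance)]) ω := h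
    rw [show (fun ω => (max (-(n : ℝ)) (min (Y0 ω) (n : ℝ))) * (1 - max 0 (min (A ω) 1)))
          = fun ω => (max (-(n : ℝ)) (min (Y0 ω) (n : ℝ))) * (1 - A ω) from by
        funext ω; rw [congrFun hgA0 ω],
      show (fun ω' => 1 - max 0 (min (A ω') 1)) = fun ω' => 1 - A ω' from hgA0] at h'
    refine h'.trans ?_
    filter_upwards [heX0] with ω hω
    have hω' : 1 - e (X ω) = (P[fun ω => 1 - A ω | (MeasurableSpace.comap X inferInstance)]) ω := hω
    rw [← hω']
  -- identify the outcome regressions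
  have h1 := aipw_aux P X hX A hA hA01 Y1 hY1 hY1int e he he01' hunc1 m₁ hm₁ hBm1 heX hcond1
  have h0 := aipw_aux P X hX (fun ω => 1 - A ω) (measurable_const.sub hA)
    (fun ω => by rcases hA01 ω with h | h
                 · right; simp [h]
                 · left; simp [h])
    Y0 hY0 hY0int (fun x => 1 - e x) (measurable_const.sub he) he01'' hunc0
    m₀ hm₀ hBm0 heX0 hcond0
  have hm1int : Integrable (fun ω => m₁ (X ω)) P := integrable_condExp.congr h1.symm
  have hm0int : Integrable (fun ω => m₀ (X ω)) P := integrable_condExp.congr h0.symm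
  have hdint : Integrable (fun ω => m₁ (X ω) - m₀ (X ω)) P := hm1int.sub hm0int
  have hRint : Integrable (fun ω => YAIPW ω - (m₁ (X ω) - m₀ (X ω))) P := hYAIPWint.sub hdint
  have hReq : ∀ ω, YAIPW ω - (m₁ (X ω) - m₀ (X ω)) =
      (A ω / e (X ω) - (1 - A ω) / (1 - e (X ω))) *
        (Y ω - (A ω * m₁ (X ω) + (1 - A ω) * m₀ (X ω))) := by
    intro ω; rw [hYAIPWdef]; ring
  have hYMint : Integrable (fun ω => Y ω - (A ω * m₁ (X ω) + (1 - A ω) * m₀ (X ω))) P :=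
    hYint.sub hMint
  have hw_m2 : Measurable[(MeasurableSpace.comap X inferInstance ⊔ MeasurableSpace.comap A inferInstance)] (fun ω => A ω / e (X ω) - (1 - A ω) / (1 - e (X ω))) :=
    (hA_m2.div he_m2).sub ((measurable_const.sub hA_m2).div (measurable_const.sub he_m2))
  have hWprod : Integrable ((fun ω => A ω / e (X ω) - (1 - A ω) / (1 - e (X ω))) *
      (fun ω => Y ω - (A ω * m₁ (X ω) + (1 - A ω) * m₀ (X ω)))) P :=
    hRint.congr (Filter.Eventually.of_forall fun ω => hReq ω)
  have hpullR := condExp_mul_of_stronglyMeasurable_left (μ := P) hw_m2.stronglyMeasurable hWprod hYMint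
  have hcondYM : P[fun ω => Y ω - (A ω * m₁ (X ω) + (1 - A ω) * m₀ (X ω)) | (MeasurableSpace.comap X inferInstance ⊔ MeasurableSpace.comap A inferInstance)] =ᵐ[P]
      (fun _ => (0 : ℝ)) := by
    have hsub := condExp_sub (μ := P) (m := (MeasurableSpace.comap X inferInstance ⊔ MeasurableSpace.comap A inferInstance)) hYint hMint
    have hre : (Y - fun ω => A ω * m₁ (X ω) + (1 - A ω) * m₀ (X ω)) =
        fun ω => Y ω - (A ω * m₁ (X ω) + (1 - A ω) * m₀ (X ω)) := rfl
    rw [hre] at hsub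
    have hMfix : P[(fun ω => A ω * m₁ (X ω) + (1 - A ω) * m₀ (X ω)) | (MeasurableSpace.comap X inferInstance ⊔ MeasurableSpace.comap A inferInstance)]
        = fun ω => A ω * m₁ (X ω) + (1 - A ω) * m₀ (X ω) :=
      condExp_of_stronglyMeasurable hm2le
        ((hA_m2.mul hm1_m2).add ((measurable_const.sub hA_m2).mul hm0_m2)).stronglyMeasurable
        hMint
    refine hsub.trans ?_
    filter_upwards [hm] with ω hω
    have hω' : A ω * m₁ (X ω) + (1 - A ω) * m₀ (X ω) = (P[Y | (MeasurableSpace.comap X inferInstance ⊔ MeasurableSpace.comap A inferInstance)]) ω := hω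
    show (P[Y | (MeasurableSpace.comap X inferInstance ⊔ MeasurableSpace.comap A inferInstance)]) ω
        - (P[(fun ω => A ω * m₁ (X ω) + (1 - A ω) * m₀ (X ω)) | (MeasurableSpace.comap X inferInstance ⊔ MeasurableSpace.comap A inferInstance)]) ω = 0
    rw [hMfix, ← hω']
    simp
  have hRzero : ∫ ω, (YAIPW ω - (m₁ (X ω) - m₀ (X ω))) ∂P = 0 := by
    have hz : P[(fun ω => A ω / e (X ω) - (1 - A ω) / (1 - e (X ω))) *
        (fun ω => Y ω - (A ω * m₁ (X ω) + (1 - A ω) * m₀ (X ω))) | (MeasurableSpace.comap X inferInstance ⊔ MeasurableSpace.comap A inferInstance)] =ᵐ[P]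
        (fun _ => (0 : ℝ)) := by
      refine hpullR.trans ?_
      filter_upwards [hcondYM] with ω hω
      have hω' : (P[fun ω => Y ω - (A ω * m₁ (X ω) + (1 - A ω) * m₀ (X ω)) | (MeasurableSpace.comap X inferInstance ⊔ MeasurableSpace.comap A inferInstance)]) ω = 0 := hω
      show (A ω / e (X ω) - (1 - A ω) / (1 - e (X ω))) *
        (P[fun ω => Y ω - (A ω * m₁ (X ω) + (1 - A ω) * m₀ (X ω)) | (MeasurableSpace.comap X inferInstance ⊔ MeasurableSpace.comap A inferInstance)]) ω = 0
      rw [hω', mul_zero]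
    calc ∫ ω, (YAIPW ω - (m₁ (X ω) - m₀ (X ω))) ∂P
        = ∫ ω, ((fun ω => A ω / e (X ω) - (1 - A ω) / (1 - e (X ω))) *
            (fun ω => Y ω - (A ω * m₁ (X ω) + (1 - A ω) * m₀ (X ω)))) ω ∂P :=
          integral_congr_ae (Filter.Eventually.of_forall fun ω => hReq ω)
      _ = ∫ ω, (P[(fun ω => A ω / e (X ω) - (1 - A ω) / (1 - e (X ω))) *
            (fun ω => Y ω - (A ω * m₁ (X ω) + (1 - A ω) * m₀ (X ω))) | (MeasurableSpace.comap X inferInstance ⊔ MeasurableSpace.comap A inferInstance)]) ω ∂P :=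
          (integral_condExp hm2le).symm
      _ = ∫ _ω, (0 : ℝ) ∂P := integral_congr_ae hz
      _ = 0 := by simp
  calc ∫ ω, YAIPW ω ∂P
      = ∫ ω, ((YAIPW ω - (m₁ (X ω) - m₀ (X ω))) + (m₁ (X ω) - m₀ (X ω))) ∂P :=
        integral_congr_ae (Filter.Eventually.of_forall fun ω => by ring)
    _ = (∫ ω, (YAIPW ω - (m₁ (X ω) - m₀ (X ω))) ∂P) + ∫ ω, (m₁ (X ω) - m₀ (X ω)) ∂P :=
        integral_add hRint hdint
    _ = ∫ ω, (m₁ (X ω) - m₀ (X ω)) ∂P := by rw [hRzero, zero_add]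
    _ = (∫ ω, m₁ (X ω) ∂P) - ∫ ω, m₀ (X ω) ∂P := integral_sub hm1int hm0int
    _ = (∫ ω, (P[Y1 | (MeasurableSpace.comap X inferInstance)]) ω ∂P) - ∫ ω, (P[Y0 | (MeasurableSpace.comap X inferInstance)]) ω ∂P := by
        rw [integral_congr_ae h1, integral_congr_ae h0]
    _ = (∫ ω, Y1 ω ∂P) - ∫ ω, Y0 ω ∂P := by
        rw [integral_condExp hmXle, integral_condExp hmXle]
    _ = ∫ ω, (Y1 ω - Y0 ω) ∂P := (integral_sub hY1int hY0int).symm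
end
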